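/- arXiv:2106.10527 — 3 statements merged into one kernel-verified Lean document; each statement's English description precedes it below -/
import Mathlib

section
/- Let H₁ ∈ ℍ^{n×n}, H₂ ∈ ℍ^{m×m} be invertible Hermitian and X, Y : ℍⁿ → ℍᵐ quaternion-linear maps. If Y^[*] Y = X^[*] X and Ker X = Ker Y, then there exists an injective linear map U : Im X → Im Y with Y = U X and [Uu, Uv]₂ = [u,v]₂ for all u, v ∈ Im X. -/
/-!
Set `U (X a) := Y a`. This is well defined and injective on `Im X` because `ker X = ker Y`,
and it is linear because `X` and `Y` are. It is an `H₂`-isometry because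
`[Y a, Y b]₂ = b* (Y* H₂ Y) a`, and `Y* H₂ Y = X* H₂ X` after cancelling the invertible `H₁⁻¹`.
-/
open Quaternion Matrix

/-- The indefinite inner product `[x,y] = y* H x`. -/
noncomputable def qform {m : ℕ} (H : Matrix (Fin m) (Fin m) ℍ[ℝ]) (x y : Fin m → ℍ[ℝ]) : ℍ[ℝ] :=
  star y ⬝ᵥ (H *ᵥ x)

namespace Matrix

variable {R : Type*} [Ring R] {m n : Type*} [Fintype n] (X Y : Matrix m n R)

theorem mulVec_eq_of_ker_le (hker : ∀ v, X *ᵥ v = 0 → Y *ᵥ v = 0) {a b : n → R}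
    (h : X *ᵥ a = X *ᵥ b) : Y *ᵥ a = Y *ᵥ b := by
  have hXab : X *ᵥ (a - b) = 0 := by rw [mulVec_sub, h, sub_self]
  simpa only [mulVec_sub, sub_eq_zero] using hker _ hXab

/-- `X a ↦ Y a`, extended by `0` off the range of `X`; independent of the choice of `a`
when `ker X ≤ ker Y`. -/
noncomputable def rangeMap (u : m → R) : m → R :=
  open Classical in
  if h : u ∈ Set.range X.mulVec then Y *ᵥ h.choose else 0

variable {X Y}

theorem rangeMap_mulVec (hker : ∀ v, X *ᵥ v = 0 → Y *ᵥ v = 0) (a : n → R) :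
    rangeMap X Y (X *ᵥ a) = Y *ᵥ a := by
  have hmem : X *ᵥ a ∈ Set.range X.mulVec := ⟨a, rfl⟩
  rw [rangeMap, dif_pos hmem]
  exact mulVec_eq_of_ker_le X Y hker hmem.choose_spec

end Matrix

theorem qform_mulVec_mulVec {m n : ℕ} (H : Matrix (Fin m) (Fin m) ℍ[ℝ])
    (Y : Matrix (Fin m) (Fin n) ℍ[ℝ]) (a b : Fin n → ℍ[ℝ]) :
    qform H (Y *ᵥ a) (Y *ᵥ b) = star b ⬝ᵥ ((Yᴴ * H * Y) *ᵥ a) := by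
  simp only [qform, star_mulVec, dotProduct_mulVec, vecMul_vecMul, Matrix.mul_assoc]

theorem stmt9_general {n m : ℕ} (H₁ K₁ : Matrix (Fin n) (Fin n) ℍ[ℝ])
    (H₂ : Matrix (Fin m) (Fin m) ℍ[ℝ])
    (hK₁ : H₁ * K₁ = 1)
    (X Y : Matrix (Fin m) (Fin n) ℍ[ℝ])
    (heq : K₁ * Yᴴ * H₂ * Y = K₁ * Xᴴ * H₂ * X)
    (hker : ∀ v : Fin n → ℍ[ℝ], X *ᵥ v = 0 ↔ Y *ᵥ v = 0) :
    ∃ U : (Fin m → ℍ[ℝ]) → (Fin m → ℍ[ℝ]),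
      (∀ u ∈ Set.range X.mulVec, U u ∈ Set.range Y.mulVec) ∧
      (∀ u ∈ Set.range X.mulVec, ∀ v ∈ Set.range X.mulVec, U (u + v) = U u + U v) ∧
      (∀ u ∈ Set.range X.mulVec, ∀ α : ℍ[ℝ],
        U (fun i => u i * α) = fun i => U u i * α) ∧
      (∀ u ∈ Set.range X.mulVec, ∀ v ∈ Set.range X.mulVec, U u = U v → u = v) ∧
      (∀ u ∈ Set.range X.mulVec, ∀ v ∈ Set.range X.mulVec,
        qform H₂ (U u) (U v) = qform H₂ u v) ∧
      (∀ x : Fin n → ℍ[ℝ], Y *ᵥ x = U (X *ᵥ x)) := by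
  have hgram : Yᴴ * H₂ * Y = Xᴴ * H₂ * X := by
    simp only [Matrix.mul_assoc] at heq ⊢
    exact isLeftRegular_of_mul_eq_one hK₁ heq
  have hU := rangeMap_mulVec fun v => (hker v).mp
  refine ⟨rangeMap X Y, ?_, ?_, ?_, ?_, ?_, fun a => (hU a).symm⟩
  · rintro _ ⟨a, rfl⟩
    exact ⟨a, (hU a).symm⟩
  · rintro _ ⟨a, rfl⟩ _ ⟨b, rfl⟩
    rw [← mulVec_add, hU, hU, hU, mulVec_add]
  · rintro _ ⟨a, rfl⟩ α
    change rangeMap X Y (MulOpposite.op α • X *ᵥ a) = MulOpposite.op α • rangeMap X Y (X *ᵥ a)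
    rw [← mulVec_smul, hU, hU, mulVec_smul]
  · rintro _ ⟨a, rfl⟩ _ ⟨b, rfl⟩ h
    rw [hU, hU] at h
    exact mulVec_eq_of_ker_le Y X (fun v => (hker v).mpr) h
  · rintro _ ⟨a, rfl⟩ _ ⟨b, rfl⟩
    rw [hU, hU, qform_mulVec_mulVec, qform_mulVec_mulVec, hgram]

theorem stmt9 {n m : ℕ} (H₁ K₁ : Matrix (Fin n) (Fin n) ℍ[ℝ])
    (H₂ : Matrix (Fin m) (Fin m) ℍ[ℝ])
    (hH₁ : H₁.IsHermitian) (hK₁ : H₁ * K₁ = 1) (hK₁' : K₁ * H₁ = 1)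
    (hH₂ : H₂.IsHermitian) (hH₂inv : ∃ K₂, H₂ * K₂ = 1 ∧ K₂ * H₂ = 1)
    (X Y : Matrix (Fin m) (Fin n) ℍ[ℝ])
    (heq : K₁ * Yᴴ * H₂ * Y = K₁ * Xᴴ * H₂ * X)
    (hker : ∀ v : Fin n → ℍ[ℝ], X *ᵥ v = 0 ↔ Y *ᵥ v = 0) :
    ∃ U : (Fin m → ℍ[ℝ]) → (Fin m → ℍ[ℝ]),
      (∀ u ∈ Set.range X.mulVec, U u ∈ Set.range Y.mulVec) ∧
      (∀ u ∈ Set.range X.mulVec, ∀ v ∈ Set.range X.mulVec, U (u + v) = U u + U v) ∧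
      (∀ u ∈ Set.range X.mulVec, ∀ α : ℍ[ℝ],
        U (fun i => u i * α) = fun i => U u i * α) ∧
      (∀ u ∈ Set.range X.mulVec, ∀ v ∈ Set.range X.mulVec, U u = U v → u = v) ∧
      (∀ u ∈ Set.range X.mulVec, ∀ v ∈ Set.range X.mulVec,
        qform H₂ (U u) (U v) = qform H₂ u v) ∧
      (∀ x : Fin n → ℍ[ℝ], Y *ᵥ x = U (X *ᵥ x)) :=
  stmt9_general H₁ K₁ H₂ hK₁ X Y heq hker
end

section
/- In the block description of Witt extensions: given invertible Hermitian Gramian matrix G = [[0,0,I,0],[0,J₁,0,0],[I,0,0,0],[0,0,0,J₂]] (block sizes m₀, m−m₀, m₀, n−m−m₀, with J₁, J₂ diagonal ±1 matrices), a block matrix Ũ = [[I,0,A₁,A₂],[0,I,A₃,A₄],[0,0,A₅,A₆],[0,0,A₇,A₈]] over ℍ satisfies Ũ* G Ũ = G if and only if A₅ = I, A₃ = A₄ = A₆ = 0, A₈* J₂ A₈ = J₂, A₂ = −A₇* J₂ A₈, and A₁ + A₁* = −A₇* J₂ A₇. -/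
/-!
Write `U = [[1, B], [0, C]]` and `G = [[G₁₁, G₁₂], [G₁₂ᴴ, G₂₂]]`. Since `G₁₁` is Hermitian, `UᴴGU = G`
amounts to the linear equation `G₁₁B + G₁₂C = G₁₂` and, given it, the quadratic one
`BᴴG₁₂ + CᴴG₁₂ᴴB + CᴴG₂₂C = G₂₂`. For the Witt Gram matrix the linear equation says `A₅ = 1`,
`A₆ = 0` and `J₁A₃ = J₁A₄ = 0`, hence `A₃ = A₄ = 0` as `J₁² = 1`; the quadratic one then splits
into the three remaining block identities, using `J₂ᴴ = J₂`.
-/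

open Quaternion Matrix

namespace Matrix

variable {l m p q r R : Type*}

theorem IsDiag.isHermitian [AddMonoid R] [StarAddMonoid R] {J : Matrix l l R} (hJ : J.IsDiag)
    (hdiag : ∀ i, IsSelfAdjoint (J i i)) : J.IsHermitian := by
  ext i j
  by_cases hij : i = j
  · subst hij; exact hdiag i
  · simp [hJ hij, hJ (Ne.symm hij)]

theorem IsDiag.mul_self_eq_one [Fintype l] [DecidableEq l] [Semiring R] {J : Matrix l l R}
    (hJ : J.IsDiag) (hdiag : ∀ i, J i i * J i i = 1) : J * J = 1 := by
  rw [← hJ.diagonal_diag, diagonal_mul_diagonal, ← diagonal_one]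
  exact congrArg diagonal (funext hdiag)

theorem mul_eq_zero_iff_of_left_inverse [Fintype l] [DecidableEq l] [Semiring R]
    {J K : Matrix l l R} (hK : K * J = 1) {X : Matrix l m R} : J * X = 0 ↔ X = 0 :=
  ⟨fun h => by rw [← Matrix.one_mul X, ← hK, Matrix.mul_assoc, h, Matrix.mul_zero],
    fun h => by rw [h, Matrix.mul_zero]⟩

theorem fromBlocks_one_zero_conjTranspose_mul_mul_eq_iff [Fintype l] [Fintype m] [DecidableEq l]
    [Ring R] [StarRing R] {B : Matrix l m R} {C : Matrix m m R}
    {G₁₁ : Matrix l l R} {G₁₂ : Matrix l m R} {G₂₂ : Matrix m m R} (hG₁₁ : G₁₁.IsHermitian) :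
    (fromBlocks 1 B 0 C)ᴴ * fromBlocks G₁₁ G₁₂ G₁₂ᴴ G₂₂ * fromBlocks 1 B 0 C =
        fromBlocks G₁₁ G₁₂ G₁₂ᴴ G₂₂ ↔
      G₁₁ * B + G₁₂ * C = G₁₂ ∧ Bᴴ * G₁₂ + Cᴴ * G₁₂ᴴ * B + Cᴴ * G₂₂ * C = G₂₂ := by
  -- the lower-left block equation is the conjugate transpose of the upper-right one
  have hadj : Bᴴ * G₁₁ + Cᴴ * G₁₂ᴴ = (G₁₁ * B + G₁₂ * C)ᴴ := by
    rw [conjTranspose_add, conjTranspose_mul, conjTranspose_mul, hG₁₁.eq]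
  have hquad : (Bᴴ * G₁₁ + Cᴴ * G₁₂ᴴ) * B + (Bᴴ * G₁₂ + Cᴴ * G₂₂) * C =
      Bᴴ * (G₁₁ * B + G₁₂ * C) + Cᴴ * G₁₂ᴴ * B + Cᴴ * G₂₂ * C := by
    simp only [Matrix.add_mul, Matrix.mul_add, Matrix.mul_assoc]
    abel
  simp only [fromBlocks_conjTranspose, fromBlocks_multiply, fromBlocks_inj, conjTranspose_one,
    conjTranspose_zero, Matrix.one_mul, Matrix.zero_mul, Matrix.mul_one, Matrix.mul_zero,
    add_zero]
  rw [hquad, hadj]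
  constructor
  · rintro ⟨-, hX, -, hq⟩
    rw [hX] at hq
    exact ⟨hX, hq⟩
  · rintro ⟨hX, hq⟩
    rw [hX]
    exact ⟨trivial, rfl, rfl, hq⟩

section WittGram

variable {p q r : Type*} [Fintype p] [Fintype q] [Fintype r] [DecidableEq p] [Ring R]
  {A₁ : Matrix p p R} {A₂ : Matrix p r R} {A₃ : Matrix q p R} {A₄ : Matrix q r R}
  {A₅ : Matrix p p R} {A₆ : Matrix p r R} {A₇ : Matrix r p R} {A₈ : Matrix r r R}

theorem wittGram_offDiag_condition_iff [DecidableEq q] {J K : Matrix q q R} (hK : K * J = 1) :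
    (fromBlocks 0 0 0 J : Matrix (p ⊕ q) (p ⊕ q) R) * fromBlocks A₁ A₂ A₃ A₄ +
        (fromBlocks 1 0 0 0 : Matrix (p ⊕ q) (p ⊕ r) R) * fromBlocks A₅ A₆ A₇ A₈ =
      fromBlocks 1 0 0 0 ↔ A₅ = 1 ∧ A₃ = 0 ∧ A₄ = 0 ∧ A₆ = 0 := by
  simp only [fromBlocks_multiply, fromBlocks_add, fromBlocks_inj, Matrix.one_mul, Matrix.zero_mul,
    add_zero, zero_add]
  rw [mul_eq_zero_iff_of_left_inverse hK, mul_eq_zero_iff_of_left_inverse hK]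
  tauto

theorem wittGram_diag_condition_iff [StarRing R] {J : Matrix r r R} (hJ : J.IsHermitian) :
    (fromBlocks A₁ A₂ 0 0 : Matrix (p ⊕ q) (p ⊕ r) R)ᴴ *
          (fromBlocks 1 0 0 0 : Matrix (p ⊕ q) (p ⊕ r) R) +
        (fromBlocks 1 0 A₇ A₈ : Matrix (p ⊕ r) (p ⊕ r) R)ᴴ *
          (fromBlocks 1 0 0 0 : Matrix (p ⊕ q) (p ⊕ r) R)ᴴ *
          (fromBlocks A₁ A₂ 0 0 : Matrix (p ⊕ q) (p ⊕ r) R) +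
        (fromBlocks 1 0 A₇ A₈ : Matrix (p ⊕ r) (p ⊕ r) R)ᴴ * fromBlocks 0 0 0 J *
          fromBlocks 1 0 A₇ A₈ =
      fromBlocks 0 0 0 J ↔
    A₈ᴴ * J * A₈ = J ∧ A₂ = -(A₇ᴴ * J * A₈) ∧ A₁ + A₁ᴴ = -(A₇ᴴ * J * A₇) := by
  simp only [fromBlocks_conjTranspose, fromBlocks_multiply, fromBlocks_add, fromBlocks_inj,
    conjTranspose_one, conjTranspose_zero, Matrix.one_mul, Matrix.zero_mul, Matrix.mul_one,
    Matrix.mul_zero, add_zero, zero_add]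
  constructor
  · rintro ⟨h₁, h₂, -, h₈⟩
    exact ⟨h₈, eq_neg_of_add_eq_zero_left h₂, eq_neg_of_add_eq_zero_left (by rwa [add_comm A₁])⟩
  · rintro ⟨h₈, rfl, h₁⟩
    refine ⟨by rw [add_comm A₁ᴴ, h₁, neg_add_cancel], neg_add_cancel _, ?_, h₈⟩
    rw [conjTranspose_neg, conjTranspose_mul, conjTranspose_mul, hJ.eq,
      conjTranspose_conjTranspose, Matrix.mul_assoc, neg_add_cancel]

end WittGram

end Matrix

theorem stmt15_general {n m m₀ : ℕ}
    (J₁ : Matrix (Fin (m - m₀)) (Fin (m - m₀)) ℍ[ℝ])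
    (J₂ : Matrix (Fin (n - m - m₀)) (Fin (n - m - m₀)) ℍ[ℝ])
    (hJ₁diag : ∀ i j, i ≠ j → J₁ i j = 0)
    (hJ₁pm : ∀ i, J₁ i i = 1 ∨ J₁ i i = -1)
    (hJ₂diag : ∀ i j, i ≠ j → J₂ i j = 0)
    (hJ₂pm : ∀ i, J₂ i i = 1 ∨ J₂ i i = -1)
    (A₁ : Matrix (Fin m₀) (Fin m₀) ℍ[ℝ])
    (A₂ : Matrix (Fin m₀) (Fin (n - m - m₀)) ℍ[ℝ])
    (A₃ : Matrix (Fin (m - m₀)) (Fin m₀) ℍ[ℝ])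
    (A₄ : Matrix (Fin (m - m₀)) (Fin (n - m - m₀)) ℍ[ℝ])
    (A₅ : Matrix (Fin m₀) (Fin m₀) ℍ[ℝ])
    (A₆ : Matrix (Fin m₀) (Fin (n - m - m₀)) ℍ[ℝ])
    (A₇ : Matrix (Fin (n - m - m₀)) (Fin m₀) ℍ[ℝ])
    (A₈ : Matrix (Fin (n - m - m₀)) (Fin (n - m - m₀)) ℍ[ℝ])
    (G : Matrix ((Fin m₀ ⊕ Fin (m - m₀)) ⊕ (Fin m₀ ⊕ Fin (n - m - m₀)))
        ((Fin m₀ ⊕ Fin (m - m₀)) ⊕ (Fin m₀ ⊕ Fin (n - m - m₀))) ℍ[ℝ])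
    (hG : G = fromBlocks (fromBlocks 0 0 0 J₁) (fromBlocks 1 0 0 0)
        (fromBlocks 1 0 0 0) (fromBlocks 0 0 0 J₂))
    (U : Matrix ((Fin m₀ ⊕ Fin (m - m₀)) ⊕ (Fin m₀ ⊕ Fin (n - m - m₀)))
        ((Fin m₀ ⊕ Fin (m - m₀)) ⊕ (Fin m₀ ⊕ Fin (n - m - m₀))) ℍ[ℝ])
    (hU : U = fromBlocks 1 (fromBlocks A₁ A₂ A₃ A₄) 0 (fromBlocks A₅ A₆ A₇ A₈)) :
    Uᴴ * G * U = G ↔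
      (A₅ = 1 ∧ A₃ = 0 ∧ A₄ = 0 ∧ A₆ = 0 ∧
        A₈ᴴ * J₂ * A₈ = J₂ ∧ A₂ = -(A₇ᴴ * J₂ * A₈) ∧
        A₁ + A₁ᴴ = -(A₇ᴴ * J₂ * A₇)) := by
  have hJ₁ : J₁ * J₁ = 1 := IsDiag.mul_self_eq_one hJ₁diag fun i => by
    rcases hJ₁pm i with h | h <;> simp [h]
  have hJ₁h : J₁.IsHermitian := IsDiag.isHermitian hJ₁diag fun i => by
    rcases hJ₁pm i with h | h <;> simp [h, IsSelfAdjoint]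
  have hJ₂h : J₂.IsHermitian := IsDiag.isHermitian hJ₂diag fun i => by
    rcases hJ₂pm i with h | h <;> simp [h, IsSelfAdjoint]
  have hG₁₁ : (fromBlocks 0 0 0 J₁ : Matrix (Fin m₀ ⊕ Fin (m - m₀)) _ ℍ[ℝ]).IsHermitian := by
    simp [IsHermitian, fromBlocks_conjTranspose, hJ₁h.eq]
  have hG₂₁ : (fromBlocks 1 0 0 0 :
      Matrix (Fin m₀ ⊕ Fin (m - m₀)) (Fin m₀ ⊕ Fin (n - m - m₀)) ℍ[ℝ])ᴴ = fromBlocks 1 0 0 0 := by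
    simp [fromBlocks_conjTranspose]
  subst hG hU
  rw [← hG₂₁, fromBlocks_one_zero_conjTranspose_mul_mul_eq_iff hG₁₁,
    wittGram_offDiag_condition_iff hJ₁]
  constructor
  · rintro ⟨⟨rfl, rfl, rfl, rfl⟩, h⟩
    exact ⟨rfl, rfl, rfl, rfl, (wittGram_diag_condition_iff hJ₂h).1 h⟩
  · rintro ⟨rfl, rfl, rfl, rfl, h⟩
    exact ⟨⟨rfl, rfl, rfl, rfl⟩, (wittGram_diag_condition_iff hJ₂h).2 h⟩

theorem stmt15 {n m m₀ : ℕ} (hm : m₀ ≤ m) (hn : m ≤ n)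
    (J₁ : Matrix (Fin (m - m₀)) (Fin (m - m₀)) ℍ[ℝ])
    (J₂ : Matrix (Fin (n - m - m₀)) (Fin (n - m - m₀)) ℍ[ℝ])
    (hJ₁diag : ∀ i j, i ≠ j → J₁ i j = 0)
    (hJ₁pm : ∀ i, J₁ i i = 1 ∨ J₁ i i = -1)
    (hJ₂diag : ∀ i j, i ≠ j → J₂ i j = 0)
    (hJ₂pm : ∀ i, J₂ i i = 1 ∨ J₂ i i = -1)
    (A₁ : Matrix (Fin m₀) (Fin m₀) ℍ[ℝ])
    (A₂ : Matrix (Fin m₀) (Fin (n - m - m₀)) ℍ[ℝ])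
    (A₃ : Matrix (Fin (m - m₀)) (Fin m₀) ℍ[ℝ])
    (A₄ : Matrix (Fin (m - m₀)) (Fin (n - m - m₀)) ℍ[ℝ])
    (A₅ : Matrix (Fin m₀) (Fin m₀) ℍ[ℝ])
    (A₆ : Matrix (Fin m₀) (Fin (n - m - m₀)) ℍ[ℝ])
    (A₇ : Matrix (Fin (n - m - m₀)) (Fin m₀) ℍ[ℝ])
    (A₈ : Matrix (Fin (n - m - m₀)) (Fin (n - m - m₀)) ℍ[ℝ])
    (G : Matrix ((Fin m₀ ⊕ Fin (m - m₀)) ⊕ (Fin m₀ ⊕ Fin (n - m - m₀)))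
        ((Fin m₀ ⊕ Fin (m - m₀)) ⊕ (Fin m₀ ⊕ Fin (n - m - m₀))) ℍ[ℝ])
    (hG : G = fromBlocks (fromBlocks 0 0 0 J₁) (fromBlocks 1 0 0 0)
        (fromBlocks 1 0 0 0) (fromBlocks 0 0 0 J₂))
    (U : Matrix ((Fin m₀ ⊕ Fin (m - m₀)) ⊕ (Fin m₀ ⊕ Fin (n - m - m₀)))
        ((Fin m₀ ⊕ Fin (m - m₀)) ⊕ (Fin m₀ ⊕ Fin (n - m - m₀))) ℍ[ℝ])
    (hU : U = fromBlocks 1 (fromBlocks A₁ A₂ A₃ A₄) 0 (fromBlocks A₅ A₆ A₇ A₈)) :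
    Uᴴ * G * U = G ↔
      (A₅ = 1 ∧ A₃ = 0 ∧ A₄ = 0 ∧ A₆ = 0 ∧
        A₈ᴴ * J₂ * A₈ = J₂ ∧ A₂ = -(A₇ᴴ * J₂ * A₈) ∧
        A₁ + A₁ᴴ = -(A₇ᴴ * J₂ * A₇)) :=
  stmt15_general J₁ J₂ hJ₁diag hJ₁pm hJ₂diag hJ₂pm A₁ A₂ A₃ A₄ A₅ A₆ A₇ A₈ G hG U hU
end

section
/- Every quaternion matrix Ũ of the form [[I, 0, −(1/2)P₂* J₂ P₂ + P₃, −P₂* J₂ P₁],[0, I, 0, 0],[0, 0, I, 0],[0, 0, P₂, P₁]] with P₁ J₂-unitary (P₁* J₂ P₁ = J₂), P₂ arbitrary of size (n−m−m₀)×m₀, and P₃ skew-Hermitian m₀×m₀ (P₃* = −P₃), satisfies Ũ* G Ũ = G for G = [[0,0,I,0],[0,J₁,0,0],[I,0,0,0],[0,0,0,J₂]]. -/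
/-!
Multiplying out the blocks, `Ũᴴ G Ũ` differs from `G` only in the `P₁`-`P₁` block, which is
`P₁ᴴ J₂ P₁ = J₂`, and in the top-left block of the last diagonal block, which is
`A + Aᴴ + P₂ᴴ J₂ P₂` for the corner `A = -½ P₂ᴴ J₂ P₂ + P₃` of `Ũ`. Since `J₂` is Hermitian and
`P₃` is skew-Hermitian, `A + Aᴴ = -P₂ᴴ J₂ P₂`, so this block vanishes.
-/

open Quaternion Matrix

namespace Matrix

variable {k l p R : Type*}

theorem IsDiag.isHermitian_s16 [DecidableEq k] [AddMonoid R] [StarAddMonoid R] {A : Matrix k k R}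
    (hA : A.IsDiag) (hdiag : ∀ i, IsSelfAdjoint (A i i)) : A.IsHermitian := by
  rw [← hA.diagonal_diag]
  exact isHermitian_diagonal_of_self_adjoint _ (funext hdiag)

theorem IsHermitian.smul_of_commute [Mul R] [StarMul R] {A : Matrix k k R} (hA : A.IsHermitian)
    {c : R} (hc : IsSelfAdjoint c) (hcomm : ∀ x, Commute c x) : (c • A).IsHermitian := by
  ext i j
  rw [conjTranspose_apply, smul_apply, smul_apply, smul_eq_mul, smul_eq_mul, star_mul,
    hc.star_eq, hA.apply, (hcomm _).eq]

theorem add_conjTranspose_neg_half_smul_add [DivisionRing R] [StarRing R] (h2 : (2 : R) ≠ 0)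
    {S P : Matrix k k R} (hS : S.IsHermitian) (hP : Pᴴ = -P) :
    (-((2 : R)⁻¹ • S) + P) + (-((2 : R)⁻¹ • S) + P)ᴴ = -S := by
  have hhalf : ((2 : R)⁻¹ • S).IsHermitian :=
    hS.smul_of_commute (by simp [IsSelfAdjoint, star_inv₀])
      fun x => (Commute.ofNat_left 2 x).inv_left₀
  have htwo : (2 : R)⁻¹ • S + (2 : R)⁻¹ • S = S := by
    rw [← add_smul, ← two_mul, mul_inv_cancel₀ h2, one_smul]
  rw [conjTranspose_add, conjTranspose_neg, hhalf.eq, hP]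
  conv_rhs => rw [← htwo]
  abel

theorem fromBlocks_conjTranspose_mul_mul_fromBlocks [Fintype k] [Fintype l] [Fintype p]
    [DecidableEq k] [DecidableEq l] [Ring R] [StarRing R] (J₁ : Matrix l l R)
    {J₂ P₁ : Matrix p p R} (hJ₂ : J₂.IsHermitian) (hP₁ : P₁ᴴ * J₂ * P₁ = J₂)
    (P₂ : Matrix p k R) {A : Matrix k k R} (hA : A + Aᴴ = -(P₂ᴴ * J₂ * P₂)) :
    (fromBlocks (1 : Matrix (k ⊕ l) (k ⊕ l) R) (fromBlocks A (-(P₂ᴴ * J₂ * P₁)) 0 0) 0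
        (fromBlocks (1 : Matrix k k R) 0 P₂ P₁))ᴴ *
        fromBlocks (fromBlocks 0 0 0 J₁) (fromBlocks 1 0 0 0) (fromBlocks 1 0 0 0)
          (fromBlocks 0 0 0 J₂) *
        fromBlocks 1 (fromBlocks A (-(P₂ᴴ * J₂ * P₁)) 0 0) 0
          (fromBlocks (1 : Matrix k k R) 0 P₂ P₁) =
      fromBlocks (fromBlocks 0 0 0 J₁) (fromBlocks 1 0 0 0) (fromBlocks 1 0 0 0)
        (fromBlocks 0 0 0 J₂) := by
  rw [Matrix.mul_assoc] at hP₁ hA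
  simp only [fromBlocks_conjTranspose, conjTranspose_neg, conjTranspose_mul, hJ₂.eq,
    conjTranspose_one, conjTranspose_zero, conjTranspose_conjTranspose, fromBlocks_multiply,
    fromBlocks_add, Matrix.mul_one, Matrix.one_mul, Matrix.mul_zero, Matrix.zero_mul, add_zero,
    zero_add, Matrix.mul_assoc, Matrix.mul_neg, neg_zero, neg_add_cancel, ← add_assoc, hA, hP₁]

end Matrix

theorem stmt16_general {n m m₀ : ℕ}
    (J₁ : Matrix (Fin (m - m₀)) (Fin (m - m₀)) ℍ[ℝ])
    (J₂ : Matrix (Fin (n - m - m₀)) (Fin (n - m - m₀)) ℍ[ℝ])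
    (hJ₂diag : ∀ i j, i ≠ j → J₂ i j = 0)
    (hJ₂pm : ∀ i, J₂ i i = 1 ∨ J₂ i i = -1)
    (P₁ : Matrix (Fin (n - m - m₀)) (Fin (n - m - m₀)) ℍ[ℝ])
    (hP₁ : P₁ᴴ * J₂ * P₁ = J₂)
    (P₂ : Matrix (Fin (n - m - m₀)) (Fin m₀) ℍ[ℝ])
    (P₃ : Matrix (Fin m₀) (Fin m₀) ℍ[ℝ]) (hP₃ : P₃ᴴ = -P₃)
    (G : Matrix ((Fin m₀ ⊕ Fin (m - m₀)) ⊕ (Fin m₀ ⊕ Fin (n - m - m₀)))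
        ((Fin m₀ ⊕ Fin (m - m₀)) ⊕ (Fin m₀ ⊕ Fin (n - m - m₀))) ℍ[ℝ])
    (hG : G = fromBlocks (fromBlocks 0 0 0 J₁) (fromBlocks 1 0 0 0)
        (fromBlocks 1 0 0 0) (fromBlocks 0 0 0 J₂))
    (U : Matrix ((Fin m₀ ⊕ Fin (m - m₀)) ⊕ (Fin m₀ ⊕ Fin (n - m - m₀)))
        ((Fin m₀ ⊕ Fin (m - m₀)) ⊕ (Fin m₀ ⊕ Fin (n - m - m₀))) ℍ[ℝ])
    (hU : U = fromBlocks 1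
        (fromBlocks (-((2 : ℍ[ℝ])⁻¹ • (P₂ᴴ * J₂ * P₂)) + P₃) (-(P₂ᴴ * J₂ * P₁)) 0 0)
        0 (fromBlocks 1 0 P₂ P₁)) :
    Uᴴ * G * U = G := by
  have hJ₂ : J₂.IsHermitian := IsDiag.isHermitian_s16 hJ₂diag fun i => by
    rcases hJ₂pm i with h | h <;> simp [h, IsSelfAdjoint]
  have h2 : (2 : ℍ[ℝ]) ≠ 0 := fun h => two_ne_zero (congrArg (·.re) h)
  subst hG hU
  exact fromBlocks_conjTranspose_mul_mul_fromBlocks J₁ hJ₂ hP₁ P₂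
    (add_conjTranspose_neg_half_smul_add h2 (isHermitian_conjTranspose_mul_mul P₂ hJ₂) hP₃)

theorem stmt16 {n m m₀ : ℕ} (hm : m₀ ≤ m) (hn : m ≤ n)
    (J₁ : Matrix (Fin (m - m₀)) (Fin (m - m₀)) ℍ[ℝ])
    (J₂ : Matrix (Fin (n - m - m₀)) (Fin (n - m - m₀)) ℍ[ℝ])
    (hJ₁diag : ∀ i j, i ≠ j → J₁ i j = 0)
    (hJ₁pm : ∀ i, J₁ i i = 1 ∨ J₁ i i = -1)
    (hJ₂diag : ∀ i j, i ≠ j → J₂ i j = 0)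
    (hJ₂pm : ∀ i, J₂ i i = 1 ∨ J₂ i i = -1)
    (P₁ : Matrix (Fin (n - m - m₀)) (Fin (n - m - m₀)) ℍ[ℝ])
    (hP₁ : P₁ᴴ * J₂ * P₁ = J₂)
    (P₂ : Matrix (Fin (n - m - m₀)) (Fin m₀) ℍ[ℝ])
    (P₃ : Matrix (Fin m₀) (Fin m₀) ℍ[ℝ]) (hP₃ : P₃ᴴ = -P₃)
    (G : Matrix ((Fin m₀ ⊕ Fin (m - m₀)) ⊕ (Fin m₀ ⊕ Fin (n - m - m₀)))
        ((Fin m₀ ⊕ Fin (m - m₀)) ⊕ (Fin m₀ ⊕ Fin (n - m - m₀))) ℍ[ℝ])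
    (hG : G = fromBlocks (fromBlocks 0 0 0 J₁) (fromBlocks 1 0 0 0)
        (fromBlocks 1 0 0 0) (fromBlocks 0 0 0 J₂))
    (U : Matrix ((Fin m₀ ⊕ Fin (m - m₀)) ⊕ (Fin m₀ ⊕ Fin (n - m - m₀)))
        ((Fin m₀ ⊕ Fin (m - m₀)) ⊕ (Fin m₀ ⊕ Fin (n - m - m₀))) ℍ[ℝ])
    (hU : U = fromBlocks 1
        (fromBlocks (-((2 : ℍ[ℝ])⁻¹ • (P₂ᴴ * J₂ * P₂)) + P₃) (-(P₂ᴴ * J₂ * P₁)) 0 0)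
        0 (fromBlocks 1 0 P₂ P₁)) :
    Uᴴ * G * U = G :=
  stmt16_general J₁ J₂ hJ₂diag hJ₂pm P₁ hP₁ P₂ P₃ hP₃ G hG U hU
end
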